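/- For the Lie algebra example on ℝ⁴, if λ₃ = ελ₁ and λ₄ = ελ₂ for some ε ∈ {1, −1}, then the curvature tensors of the Levi-Civita connection ∇ and of the RPT-connection ∇' satisfy R(x,y,z,w) = R'(x,y,z,w) − (1/4)g(T(x,y), T(z,w)) for all x, y, z, w in ℝ⁴. (This is the conclusion of Theorem 5.1 — the curvature relation for a RPT-connection with parallel torsion whose curvature tensor is a Riemannian P-tensor — realized in the Lie group example, where by Theorem 7.7 the condition λ₃ = ελ₁, λ₄ = ελ₂ is exactly the condition for parallel torsion and Riemannian P-tensor curvature.) -/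
import Mathlib


/-- The 4-dimensional real vector space of the Lie group example. -/
abbrev V4 : Type := Fin 4 → ℝ

/-- The standard inner product on `ℝ⁴`. -/
def g4 (x y : V4) : ℝ := ∑ i, x i * y i

/-- The almost product structure `P` with `Pe₁ = e₃, Pe₂ = e₄, Pe₃ = e₁, Pe₄ = e₂`. -/
def P4 (x : V4) : V4 := ![x 2, x 3, x 0, x 1]

/-- The standard basis vectors `e₁, e₂, e₃, e₄` of `ℝ⁴`. -/
def e4 (i : Fin 4) : V4 := Pi.single i 1
noncomputable section


/-- The covariant derivative `(∇ₓP)y = ∇ₓ(Py) - P(∇ₓy)` built from a connection `nb`. -/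
def cdP (nb : V4 → V4 → V4) (x y : V4) : V4 := nb x (P4 y) - P4 (nb x y)

/-- The transformation tensor `Q(x,y) = -(1/4){(∇ₓP)(Py) - (∇_{Px}P)y - 2(∇_yP)(Px)}`
of the RPT-connection. -/
def Q4 (nb : V4 → V4 → V4) (x y : V4) : V4 :=
  -((1/4 : ℝ) • (cdP nb x (P4 y) - cdP nb (P4 x) y - (2 : ℝ) • cdP nb y (P4 x)))

/-- The RPT-connection `∇'ₓy = ∇ₓy + Q(x,y)`. -/
def nbP (nb : V4 → V4 → V4) (x y : V4) : V4 := nb x y + Q4 nb x y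

/-- The torsion `T(x,y) = ∇'ₓy - ∇'_yx - [x,y]` of the RPT-connection. -/
def Tor4 (B nb : V4 → V4 → V4) (x y : V4) : V4 := nbP nb x y - nbP nb y x - B x y

/-- The curvature operator `R(x,y)z = ∇ₓ(∇_yz) - ∇_y(∇ₓz) - ∇_{[x,y]}z` of a
connection `nab` (on left-invariant fields of the Lie group with bracket `B`). -/
def R4 (B nab : V4 → V4 → V4) (x y z : V4) : V4 :=
  nab x (nab y z) - nab y (nab x z) - nab (B x y) z

/-- The curvature (0,4)-tensor `R'(x,y,z,w) = g(R'(x,y)z,w)` of the RPT-connection. -/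
def Rform4 (B nb : V4 → V4 → V4) (x y z w : V4) : ℝ := g4 (R4 B (nbP nb) x y z) w

/-- Explicit formula for the Lie bracket of the example. -/
def Bex (l1 l2 l3 l4 : ℝ) (x y : V4) : V4 :=
  ![ l1 * (x 0 * y 1 - x 1 * y 0) - l3 * (x 0 * y 3 - x 3 * y 0) - l4 * (x 1 * y 3 - x 3 * y 1),
     l2 * (x 0 * y 1 - x 1 * y 0) + l3 * (x 0 * y 2 - x 2 * y 0) + l4 * (x 1 * y 2 - x 2 * y 1),
     l1 * (x 1 * y 2 - x 2 * y 1) + l2 * (x 1 * y 3 - x 3 * y 1) + l3 * (x 2 * y 3 - x 3 * y 2),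
     -(l1 * (x 0 * y 2 - x 2 * y 0)) - l2 * (x 0 * y 3 - x 3 * y 0) + l4 * (x 2 * y 3 - x 3 * y 2) ]

/-- Explicit formula for the Levi-Civita connection of the example. -/
def Nex (l1 l2 l3 l4 : ℝ) (x y : V4) : V4 :=
  ![ (1/2) * l4 * x 3 * y 1 + (-1/2) * l4 * x 1 * y 3 + (1/2) * l3 * x 2 * y 1 + (1/2) * l3 * x 1 * y 2 + -(l3 * x 0 * y 3) + -(l2 * x 3 * y 3) + l2 * x 1 * y 1 + (-1/2) * l1 * x 3 * y 2 + (-1/2) * l1 * x 2 * y 3 + l1 * x 0 * y 1,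
     (-1/2) * l4 * x 3 * y 0 + l4 * x 1 * y 2 + (-1/2) * l4 * x 0 * y 3 + (-1/2) * l3 * x 2 * y 0 + (1/2) * l3 * x 0 * y 2 + (1/2) * l2 * x 3 * y 2 + (1/2) * l2 * x 2 * y 3 + -(l2 * x 1 * y 0) + l1 * x 2 * y 2 + -(l1 * x 0 * y 0),
     l4 * x 3 * y 3 + -(l4 * x 1 * y 1) + l3 * x 2 * y 3 + (-1/2) * l3 * x 1 * y 0 + (-1/2) * l3 * x 0 * y 1 + (-1/2) * l2 * x 3 * y 1 + (1/2) * l2 * x 1 * y 3 + (1/2) * l1 * x 3 * y 0 + -(l1 * x 2 * y 1) + (1/2) * l1 * x 0 * y 3,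
     -(l4 * x 3 * y 2) + (1/2) * l4 * x 1 * y 0 + (1/2) * l4 * x 0 * y 1 + -(l3 * x 2 * y 2) + l3 * x 0 * y 0 + l2 * x 3 * y 0 + (-1/2) * l2 * x 2 * y 1 + (-1/2) * l2 * x 1 * y 2 + (1/2) * l1 * x 2 * y 0 + (-1/2) * l1 * x 0 * y 2 ]

/-- Explicit formula for the RPT-connection of the example. -/
def NPex (l1 l2 l3 l4 : ℝ) (x y : V4) : V4 :=
  ![ l4 * x 3 * y 1 + -(l4 * x 1 * y 3) + l3 * x 2 * y 1 + -(l3 * x 0 * y 3) + -(l2 * x 3 * y 3) + l2 * x 1 * y 1 + -(l1 * x 2 * y 3) + l1 * x 0 * y 1,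
     -(l4 * x 3 * y 0) + l4 * x 1 * y 2 + -(l3 * x 2 * y 0) + l3 * x 0 * y 2 + l2 * x 3 * y 2 + -(l2 * x 1 * y 0) + l1 * x 2 * y 2 + -(l1 * x 0 * y 0),
     l4 * x 3 * y 3 + -(l4 * x 1 * y 1) + l3 * x 2 * y 3 + -(l3 * x 0 * y 1) + -(l2 * x 3 * y 1) + l2 * x 1 * y 3 + -(l1 * x 2 * y 1) + l1 * x 0 * y 3,
     -(l4 * x 3 * y 2) + l4 * x 1 * y 0 + -(l3 * x 2 * y 2) + l3 * x 0 * y 0 + l2 * x 3 * y 0 + -(l2 * x 1 * y 2) + l1 * x 2 * y 0 + -(l1 * x 0 * y 2) ]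

/-- Explicit formula for the torsion of the RPT-connection of the example. -/
def Tex (l1 l2 l3 l4 : ℝ) (x y : V4) : V4 :=
  ![ l4 * x 3 * y 1 + -(l4 * x 1 * y 3) + l3 * x 2 * y 1 + -(l3 * x 1 * y 2) + l1 * x 3 * y 2 + -(l1 * x 2 * y 3),
     -(l4 * x 3 * y 0) + l4 * x 0 * y 3 + -(l3 * x 2 * y 0) + l3 * x 0 * y 2 + l2 * x 3 * y 2 + -(l2 * x 2 * y 3),
     l3 * x 1 * y 0 + -(l3 * x 0 * y 1) + -(l2 * x 3 * y 1) + l2 * x 1 * y 3 + -(l1 * x 3 * y 0) + l1 * x 0 * y 3,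
     l4 * x 1 * y 0 + -(l4 * x 0 * y 1) + l2 * x 2 * y 1 + -(l2 * x 1 * y 2) + l1 * x 2 * y 0 + -(l1 * x 0 * y 2) ]

set_option maxHeartbeats 4000000 in
/-- Theorem 5.1 realized in the Lie group example: if `λ₃ = ελ₁` and
`λ₄ = ελ₂` for some `ε = ±1`, then the curvature tensors of the Levi-Civita connection
`∇` and of the RPT-connection `∇'` satisfy
`R(x,y,z,w) = R'(x,y,z,w) - (1/4)g(T(x,y),T(z,w))`. -/
theorem stmt_19
    (l1 l2 l3 l4 : ℝ) (B : V4 → V4 → V4)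
    (hBadd1 : ∀ x x' y, B (x + x') y = B x y + B x' y)
    (hBsmul1 : ∀ (a : ℝ) (x y : V4), B (a • x) y = a • B x y)
    (hBadd2 : ∀ x y y', B x (y + y') = B x y + B x y')
    (hBsmul2 : ∀ (a : ℝ) (x y : V4), B x (a • y) = a • B x y)
    (hBanti : ∀ x y, B x y = -B y x)
    (hB12 : B (e4 0) (e4 1) = l1 • e4 0 + l2 • e4 1)
    (hB13 : B (e4 0) (e4 2) = l3 • e4 1 - l1 • e4 3)
    (hB14 : B (e4 0) (e4 3) = -(l3 • e4 0) - l2 • e4 3)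
    (hB23 : B (e4 1) (e4 2) = l4 • e4 1 + l1 • e4 2)
    (hB24 : B (e4 1) (e4 3) = -(l4 • e4 0) + l2 • e4 2)
    (hB34 : B (e4 2) (e4 3) = l3 • e4 2 + l4 • e4 3)
    (nb : V4 → V4 → V4)
    (hK : ∀ x y z, 2 * g4 (nb x y) z = g4 (B x y) z + g4 (B z x) y + g4 (B z y) x)
    (ε : ℝ) (hε : ε = 1 ∨ ε = -1) (h3 : l3 = ε * l1) (h4 : l4 = ε * l2) :
    ∀ x y z w : V4,
      g4 (R4 B nb x y z) w
        = Rform4 B nb x y z w - (1/4) * g4 (Tor4 B nb x y) (Tor4 B nb z w) := by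
  have he0 : e4 0 = ![1,0,0,0] := by funext i; fin_cases i <;> simp [e4]
  have he1 : e4 1 = ![0,1,0,0] := by funext i; fin_cases i <;> simp [e4]
  have he2 : e4 2 = ![0,0,1,0] := by funext i; fin_cases i <;> simp [e4]
  have he3 : e4 3 = ![0,0,0,1] := by funext i; fin_cases i <;> simp [e4]
  have hB0 : ∀ v, B v v = 0 := by
    intro v
    have h := hBanti v v
    funext i
    have h2 := congrFun h i
    simp only [Pi.neg_apply] at h2
    have : B v v i = 0 := by linarith
    simpa using this
  have hdec : ∀ v : V4, v = v 0 • e4 0 + v 1 • e4 1 + v 2 • e4 2 + v 3 • e4 3 := by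
    intro v
    funext i
    fin_cases i <;> simp [he0, he1, he2, he3]
  have hBgen : ∀ x y, B x y = Bex l1 l2 l3 l4 x y := by
    intro x y
    have hB21 : B (e4 1) (e4 0) = -(l1 • e4 0 + l2 • e4 1) := by rw [hBanti, hB12]
    have hB31 : B (e4 2) (e4 0) = -(l3 • e4 1 - l1 • e4 3) := by rw [hBanti, hB13]
    have hB41 : B (e4 3) (e4 0) = -(-(l3 • e4 0) - l2 • e4 3) := by rw [hBanti, hB14]
    have hB32 : B (e4 2) (e4 1) = -(l4 • e4 1 + l1 • e4 2) := by rw [hBanti, hB23]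
    have hB42 : B (e4 3) (e4 1) = -(-(l4 • e4 0) + l2 • e4 2) := by rw [hBanti, hB24]
    have hB43 : B (e4 3) (e4 2) = -(l3 • e4 2 + l4 • e4 3) := by rw [hBanti, hB34]
    calc B x y = B (x 0 • e4 0 + x 1 • e4 1 + x 2 • e4 2 + x 3 • e4 3)
                  (y 0 • e4 0 + y 1 • e4 1 + y 2 • e4 2 + y 3 • e4 3) := by
          rw [← hdec x, ← hdec y]
      _ = Bex l1 l2 l3 l4 x y := by
          simp only [hBadd1, hBadd2, hBsmul1, hBsmul2, hB0, hB12, hB13, hB14, hB23, hB24,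
            hB34, hB21, hB31, hB41, hB32, hB42, hB43, smul_zero, smul_neg, smul_add,
            smul_sub, smul_smul]
          funext i
          fin_cases i <;>
            simp [Bex, he0, he1, he2, he3, Pi.add_apply, Pi.sub_apply, Pi.neg_apply,
              Pi.smul_apply, smul_eq_mul] <;> ring
  have hge : ∀ (v : V4) (i : Fin 4), g4 v (e4 i) = v i := by
    intro v i
    fin_cases i <;> simp [g4, Fin.sum_univ_four, he0, he1, he2, he3]
  have hnb : ∀ x y, nb x y = Nex l1 l2 l3 l4 x y := by
    intro x y
    funext i
    have h := hK x y (e4 i)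
    rw [hBgen x y, hBgen (e4 i) x, hBgen (e4 i) y, hge (nb x y) i] at h
    have h2 : nb x y i = (1/2) * (Bex l1 l2 l3 l4 x y i
        + g4 (Bex l1 l2 l3 l4 (e4 i) x) y + g4 (Bex l1 l2 l3 l4 (e4 i) y) x) := by
      rw [hge] at h; linarith
    rw [h2]
    fin_cases i <;>
      simp [Nex, Bex, g4, Fin.sum_univ_four, he0, he1, he2, he3] <;> ring
  have hnbP : ∀ x y, nbP nb x y = NPex l1 l2 l3 l4 x y := by
    intro x y
    funext i
    simp only [nbP, Q4, cdP, hnb, P4, Pi.add_apply, Pi.sub_apply, Pi.neg_apply,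
      Pi.smul_apply, smul_eq_mul]
    fin_cases i <;> simp [Nex, NPex] <;> ring
  have hT : ∀ x y, Tor4 B nb x y = Tex l1 l2 l3 l4 x y := by
    intro x y
    funext i
    simp only [Tor4, hnbP, hBgen, Pi.sub_apply]
    fin_cases i <;> simp [NPex, Tex, Bex] <;> ring
  intro x y z w
  subst h3 h4
  simp only [Rform4, R4, hT, hnb, hnbP, hBgen, g4, Fin.sum_univ_four, Pi.sub_apply]
  rcases hε with h | h <;> subst h <;>
    simp only [Nex, NPex, Tex, Bex, Matrix.cons_val_zero, Matrix.cons_val_one,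
      Matrix.head_cons, Matrix.cons_val_two, Matrix.tail_cons, Matrix.cons_val_three,
      Matrix.head_fin_const] <;> ring
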